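/- For the operator D_{q^{-1}} acting on the variable a, and any nonnegative integer n, D_{q^{-1}}^n { (as;q)_∞ / (aω;q)_∞ } = (−q/((1−q)a))^n · ((s/ω;q)_n / (q/(aω);q)_n) · (as;q)_∞/(aω;q)_∞, valid where all products converge and denominators are nonzero. -/

import Mathlib

noncomputable def qPoch (x q : ℂ) (n : ℕ) : ℂ := ∏ j ∈ Finset.range n, (1 - x * q ^ j)

noncomputable def qPochInf (x q : ℂ) : ℂ := ∏' j : ℕ, (1 - x * q ^ j)

noncomputable def qBinom (q : ℂ) (n k : ℕ) : ℂ := qPoch q q n / (qPoch q q k * qPoch q q (n - k))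

noncomputable def Dq (q : ℂ) (f : ℂ → ℂ) : ℂ → ℂ := fun a => (f a - f (q * a)) / ((1 - q) * a)

noncomputable def Dqinv (q : ℂ) (f : ℂ → ℂ) : ℂ → ℂ := fun a => (f (q⁻¹ * a) - f a) / ((q⁻¹ - 1) * a)

noncomputable def mPoch {m : ℕ} (a : Fin m → ℂ) (q : ℂ) (k : ℕ) : ℂ := ∏ i, qPoch (a i) q k

noncomputable def phi {r : ℕ} (a : Fin (r + 1) → ℂ) (b : Fin r → ℂ) (q x y : ℂ) (n : ℕ) : ℂ :=
  ∑ k ∈ Finset.range (n + 1), qBinom q n k * (mPoch a q k / mPoch b q k) * x ^ k * y ^ (n - k)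

noncomputable def psi {r : ℕ} (a : Fin (r + 1) → ℂ) (b : Fin r → ℂ) (q x y : ℂ) (n : ℕ) : ℂ :=
  ∑ k ∈ Finset.range (n + 1), qBinom q n k * (mPoch a q k / mPoch b q k) *
    q ^ ((((k + 1).choose 2 : ℕ) : ℤ) - (n : ℤ) * (k : ℤ)) * x ^ k * y ^ (n - k)

/-! Write `f_ω(a) = (as;q)_∞/(aω;q)_∞`. The functional equation `(x;q)_∞ = (1 - x)(xq;q)_∞`
gives `D_{q⁻¹} f_ω = (ω - s)/(1 - q) · f_{ω/q}`, so `n` applications of `D_{q⁻¹}` produce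
`∏_{k<n} (ω q⁻ᵏ - s)/(1 - q) · f_{ω q⁻ⁿ}`. Splitting `(aω q⁻ⁿ;q)_∞` into
`∏_{k<n} (1 - aω q⁻ᵏ⁻¹) · (aω;q)_∞` and matching these factors with those of `(q/(aω);q)_n`
yields the stated multiple of `f_ω(a)`. -/

open Finset

theorem multipliable_one_sub_mul_pow (x : ℂ) {q : ℂ} (hq : ‖q‖ < 1) :
    Multipliable fun j : ℕ => 1 - x * q ^ j := by
  have hsum : Summable fun j : ℕ => ‖-(x * q ^ j)‖ := by
    simpa [norm_mul, norm_pow] using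
      (summable_geometric_of_lt_one (norm_nonneg q) hq).mul_left ‖x‖
  simpa [sub_eq_add_neg] using multipliable_one_add_of_summable hsum

theorem qPochInf_eq_one_sub_mul (x : ℂ) {q : ℂ} (hq : ‖q‖ < 1) :
    qPochInf x q = (1 - x) * qPochInf (x * q) q := by
  have hshift : Multipliable fun j : ℕ => 1 - x * q ^ (j + 1) := by
    convert multipliable_one_sub_mul_pow (x * q) hq using 2
    ring
  rw [qPochInf, tprod_eq_zero_mul' (f := fun j : ℕ => 1 - x * q ^ j) hshift, qPochInf]
  simp only [pow_zero, mul_one, pow_succ', mul_assoc]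

theorem qPochInf_div_pow (x : ℂ) {q : ℂ} (hq0 : q ≠ 0) (hq : ‖q‖ < 1) (n : ℕ) :
    qPochInf (x / q ^ n) q = (∏ k ∈ range n, (1 - x / q ^ (k + 1))) * qPochInf x q := by
  induction n with
  | zero => simp
  | succ n ih =>
    rw [qPochInf_eq_one_sub_mul _ hq, div_mul_eq_mul_div, pow_succ, mul_div_mul_right _ _ hq0,
      ih, prod_range_succ, pow_succ]
    ring

noncomputable def qPochInfRatio (s ω q a : ℂ) : ℂ := qPochInf (a * s) q / qPochInf (a * ω) q

theorem Dqinv_qPochInfRatio {q : ℂ} (s ω : ℂ) (hq0 : q ≠ 0) (hq : ‖q‖ < 1) {b : ℂ}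
    (hb : b ≠ 0) (hbω : b * ω ≠ q) :
    Dqinv q (qPochInfRatio s ω q) b = (ω - s) / (1 - q) * qPochInfRatio s (ω / q) q b := by
  have hshift (c : ℂ) : qPochInf (q⁻¹ * b * c) q = (1 - b * c / q) * qPochInf (b * c) q := by
    rw [qPochInf_eq_one_sub_mul _ hq]
    field_simp
  have hb' : b * (ω / q) = q⁻¹ * b * ω := by ring
  simp only [Dqinv, qPochInfRatio]
  rw [hb', hshift, hshift]
  rcases eq_or_ne (qPochInf (b * ω) q) 0 with hD | hD
  · simp [hD]
  · field_simp
    ring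

theorem iterate_Dqinv_qPochInfRatio {q : ℂ} (s ω : ℂ) (hq0 : q ≠ 0) (hq : ‖q‖ < 1) (n : ℕ)
    {x : ℂ} (hx : x ≠ 0) (hxω : ∀ k < n, x * ω ≠ q ^ (k + 1)) :
    (Dqinv q)^[n] (qPochInfRatio s ω q) x
      = (∏ k ∈ range n, (ω / q ^ k - s) / (1 - q)) * qPochInfRatio s (ω / q ^ n) q x := by
  induction n generalizing x with
  | zero => simp
  | succ n ih =>
    have hxq : q⁻¹ * x ≠ 0 := mul_ne_zero (inv_ne_zero hq0) hx
    have hxqω : ∀ k < n, q⁻¹ * x * ω ≠ q ^ (k + 1) := by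
      intro k hk h
      refine hxω (k + 1) (by omega) ?_
      field_simp at h
      linear_combination h
    have hstep : x * (ω / q ^ n) ≠ q := by
      intro h
      refine hxω n (by omega) ?_
      field_simp at h
      linear_combination h
    rw [Function.iterate_succ_apply', Dqinv, ih hxq hxqω, ih hx (fun k hk => hxω k (by omega)),
      ← mul_sub, mul_div_assoc, ← Dqinv, Dqinv_qPochInfRatio s _ hq0 hq hx hstep, prod_range_succ,
      div_div, ← pow_succ]
    ring

theorem qPochInfRatio_div_pow (s ω x : ℂ) {q : ℂ} (hq0 : q ≠ 0) (hq : ‖q‖ < 1) (n : ℕ) :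
    qPochInfRatio s (ω / q ^ n) q x
      = qPochInfRatio s ω q x / ∏ k ∈ range n, (1 - x * ω / q ^ (k + 1)) := by
  rw [qPochInfRatio, mul_div_assoc', qPochInf_div_pow _ hq0 hq, qPochInfRatio, div_mul_eq_div_div,
    div_right_comm]

theorem ne_pow_succ_of_qPoch_ne_zero {q x : ℂ} (hq0 : q ≠ 0) {n : ℕ}
    (h : qPoch (q / x) q n ≠ 0) : ∀ k < n, x ≠ q ^ (k + 1) := by
  intro k hk hx
  refine h (prod_eq_zero (mem_range.2 hk) ?_)
  rw [hx, pow_succ', div_mul_cancel_left₀ hq0, inv_mul_cancel₀ (pow_ne_zero k hq0), sub_self]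

theorem prod_mul_qPoch_eq {q a s ω : ℂ} (hq0 : q ≠ 0) (ha : a ≠ 0) (hω : ω ≠ 0) (n : ℕ) :
    (∏ k ∈ range n, (ω / q ^ k - s) / (1 - q)) * qPoch (q / (a * ω)) q n
      = (-(q / ((1 - q) * a))) ^ n * qPoch (s / ω) q n
          * ∏ k ∈ range n, (1 - a * ω / q ^ (k + 1)) := by
  have hpow : (-(q / ((1 - q) * a))) ^ n = ∏ _k ∈ range n, -(q / ((1 - q) * a)) := by
    rw [prod_const, card_range]
  rw [qPoch, qPoch, hpow, ← prod_mul_distrib, ← prod_mul_distrib, ← prod_mul_distrib]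
  refine prod_congr rfl fun k _ => ?_
  field_simp
  ring

theorem stmt7_general (q a s ω : ℂ) (hq0 : q ≠ 0) (hq1 : ‖q‖ < 1) (ha : a ≠ 0)
    (hω : ω ≠ 0) (n : ℕ)
    (hden : qPoch (q / (a * ω)) q n ≠ 0) :
    (Dqinv q)^[n] (fun a => qPochInf (a * s) q / qPochInf (a * ω) q) a
      = (-(q / ((1 - q) * a))) ^ n
          * (qPoch (s / ω) q n / qPoch (q / (a * ω)) q n)
          * (qPochInf (a * s) q / qPochInf (a * ω) q) := by
  have hne := ne_pow_succ_of_qPoch_ne_zero hq0 hden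
  have hfactors : ∏ k ∈ range n, (1 - a * ω / q ^ (k + 1)) ≠ 0 :=
    prod_ne_zero_iff.2 fun k hk h =>
      hne k (mem_range.1 hk) ((div_eq_one_iff_eq (pow_ne_zero _ hq0)).1 (sub_eq_zero.1 h).symm)
  change (Dqinv q)^[n] (qPochInfRatio s ω q) a = _ * qPochInfRatio s ω q a
  rw [iterate_Dqinv_qPochInfRatio s ω hq0 hq1 n ha hne, qPochInfRatio_div_pow _ _ _ hq0 hq1]
  have hcoeff := prod_mul_qPoch_eq (s := s) hq0 ha hω n
  generalize ∏ k ∈ range n, (1 - a * ω / q ^ (k + 1)) = B at hfactors hcoeff ⊢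
  generalize ∏ k ∈ range n, (ω / q ^ k - s) / (1 - q) = C at hcoeff ⊢
  field_simp
  linear_combination qPochInfRatio s ω q a * hcoeff

/-- `D_{q^{-1}}^n {(as;q)_∞/(aω;q)_∞}`. -/
theorem stmt7 (q a s ω : ℂ) (hq0 : q ≠ 0) (hq1 : ‖q‖ < 1) (ha : a ≠ 0)
    (hω : ω ≠ 0) (haω : ‖a * ω‖ < 1) (n : ℕ)
    (hden : qPoch (q / (a * ω)) q n ≠ 0) :
    (Dqinv q)^[n] (fun a => qPochInf (a * s) q / qPochInf (a * ω) q) a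
      = (-(q / ((1 - q) * a))) ^ n
          * (qPoch (s / ω) q n / qPoch (q / (a * ω)) q n)
          * (qPochInf (a * s) q / qPochInf (a * ω) q) :=
  stmt7_general q a s ω hq0 hq1 ha hω n hden
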